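/- Let d ≥ 1, σ ≥ 0, λ₀ > 0, δ ∈ (0,1), θ₀ > 2λ₀ and C_G > 0, and set λ(t) = λ₀(1+(1+t)^{−δ}). Let G^r : (ℤ^d∖{0}) × [0,∞) → ℂ be measurable with |G^r_k(τ)| ≤ C_G ⟨k⟩^{−1} e^{−θ₀⟨|k|τ⟩} for all k ≠ 0 and τ ≥ 0. Let S : (ℤ^d∖{0}) × [0,∞) → ℂ be measurable and define (G⋆S)_k(t) = S_k(t) + ∫₀^t G^r_k(t−s) S_k(s) ds. Then for every θ₁ > 0 with 2θ₁ < θ₀ − 2λ₀ there is a constant C > 0, depending only on C_G, σ, θ₀, λ₀ and θ₁, such that for all t ≥ 0: F[G⋆S](t,λ(t)) ≤ F[S](t,λ(t)) + C ∫₀^t e^{−2θ₁(t−s)} F[S](s,λ(s)) ds. -/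

import Mathlib

open MeasureTheory
open scoped ENNReal

noncomputable section

/-- `ℝ^d` with the Euclidean norm. -/
abbrev Ed (d : ℕ) := EuclideanSpace ℝ (Fin d)

/-- Embedding of `ℤ^d` into `ℝ^d`. -/
def toE {d : ℕ} (k : Fin d → ℤ) : Ed d := WithLp.toLp 2 (fun i => (k i : ℝ))

/-- Japanese bracket of a scalar: `⟨u⟩ = (1+u²)^{1/2}`. -/
def jap (u : ℝ) : ℝ := Real.sqrt (1 + u ^ 2)

/-- Japanese bracket of a vector: `⟨η⟩ = (1+|η|²)^{1/2}`. -/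
def japV {d : ℕ} (η : Ed d) : ℝ := Real.sqrt (1 + ‖η‖ ^ 2)

/-- Joint bracket `⟨k,η⟩ = (1+|k|²+|η|²)^{1/2}`. -/
def japKV {d : ℕ} (k : Fin d → ℤ) (η : Ed d) : ℝ := Real.sqrt (1 + ‖toE k‖ ^ 2 + ‖η‖ ^ 2)

/-- The analytic weight `A_{k,η}(z) = e^{z⟨k,η⟩} ⟨η⟩^σ`. -/
def wA (d : ℕ) (σ z : ℝ) (k : Fin d → ℤ) (η : Ed d) : ℝ :=
  Real.exp (z * japKV k η) * japV η ^ σ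

/-- The time-dependent analyticity radius `λ(t) = λ₀(1+(1+t)^{-δ})`. -/
def lam (lam0 δ t : ℝ) : ℝ := lam0 * (1 + (1 + t) ^ (-δ))

/-- The weighted norm `F[S](t,z) = Σ_{k≠0} A_{k,kt}(z) |S_k(t)|`, valued in `ℝ≥0∞`. -/
def Fnorm (d : ℕ) (σ : ℝ) (S : (Fin d → ℤ) → ℝ → ℂ) (t z : ℝ) : ℝ≥0∞ :=
  ∑' k : {k : Fin d → ℤ // k ≠ 0}, ENNReal.ofReal (wA d σ z k.1 (t • toE k.1) * ‖S k.1 t‖)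

/-! Transporting the weight from time `t` back to `s ≤ t` along the free-streaming ray `η = k τ`
costs `√2^σ ⟨u⟩^σ e^{λ(t)⟨u⟩}` with `u = |k|(t - s)`, while the kernel decays like `e^{-θ₀⟨u⟩}`;
as `λ(t) ≤ 2λ₀ < θ₀ - 2θ₁` and `t - s ≤ u` for `k ≠ 0`, the polynomial factor is absorbed into
the margin `θ₀ - 2λ₀ - 2θ₁` of the exponential, leaving `e^{-2θ₁(t-s)}`. Summing over `k` uses
only that a sum of lower integrals is at most the integral of the sum. -/

lemma one_le_jap (u : ℝ) : 1 ≤ jap u :=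
  Real.one_le_sqrt.mpr (by nlinarith [sq_nonneg u])

lemma le_jap (u : ℝ) : u ≤ jap u :=
  (le_abs_self u).trans (Real.abs_le_sqrt (by linarith))

lemma jap_add_le_sqrt_two_mul (a b : ℝ) : jap (a + b) ≤ Real.sqrt 2 * jap a * jap b := by
  rw [jap, jap, jap, mul_assoc, ← Real.sqrt_mul (by positivity : (0:ℝ) ≤ 1 + a ^ 2),
    ← Real.sqrt_mul (by norm_num : (0:ℝ) ≤ 2)]
  exact Real.sqrt_le_sqrt (by nlinarith [sq_nonneg (a - b), sq_nonneg (a * b)])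

lemma japV_eq_jap_norm {d : ℕ} (η : Ed d) : japV η = jap ‖η‖ := rfl

lemma sqrt_add_sq_le_add_sub {c a b : ℝ} (hc : 0 ≤ c) (ha : 0 ≤ a) (hab : a ≤ b) :
    Real.sqrt (c + b ^ 2) ≤ Real.sqrt (c + a ^ 2) + (b - a) := by
  have ha_le : a ≤ Real.sqrt (c + a ^ 2) := Real.le_sqrt_of_sq_le (by linarith)
  refine Real.sqrt_le_iff.mpr ⟨by linarith, ?_⟩
  nlinarith [Real.sq_sqrt (show 0 ≤ c + a ^ 2 by positivity),
    mul_nonneg (sub_nonneg.2 hab) (sub_nonneg.2 ha_le)]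

lemma one_le_norm_toE {d : ℕ} {k : Fin d → ℤ} (hk : k ≠ 0) : 1 ≤ ‖toE k‖ := by
  obtain ⟨i, hi⟩ : ∃ i, k i ≠ 0 := Function.ne_iff.mp hk
  calc (1 : ℝ) ≤ |(k i : ℝ)| := by exact_mod_cast Int.one_le_abs hi
    _ = ‖toE k i‖ := by simp [toE]
    _ ≤ ‖toE k‖ := PiLp.norm_apply_le _ _

lemma wA_nonneg (d : ℕ) (σ z : ℝ) (k : Fin d → ℤ) (η : Ed d) : 0 ≤ wA d σ z k η :=
  mul_nonneg (Real.exp_pos _).le (Real.rpow_nonneg (Real.sqrt_nonneg _) σ)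

section Ray

variable {d : ℕ} (k : Fin d → ℤ) {s t : ℝ}

lemma japKV_smul_le_add (hs : 0 ≤ s) (hst : s ≤ t) :
    japKV k (t • toE k) ≤ japKV k (s • toE k) + ‖toE k‖ * (t - s) := by
  have hK := norm_nonneg (toE k)
  simp only [japKV, norm_smul, Real.norm_eq_abs, abs_of_nonneg hs, abs_of_nonneg (hs.trans hst)]
  convert sqrt_add_sq_le_add_sub (c := 1 + ‖toE k‖ ^ 2) (by positivity) (mul_nonneg hs hK)
    (mul_le_mul_of_nonneg_right hst hK) using 2
  all_goals ring

lemma japV_smul_le_mul (hs : 0 ≤ s) (hst : s ≤ t) :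
    japV (t • toE k) ≤ Real.sqrt 2 * japV (s • toE k) * jap (‖toE k‖ * (t - s)) := by
  simp only [japV_eq_jap_norm, norm_smul, Real.norm_eq_abs, abs_of_nonneg hs,
    abs_of_nonneg (hs.trans hst)]
  convert jap_add_le_sqrt_two_mul (s * ‖toE k‖) (‖toE k‖ * (t - s)) using 2
  ring

lemma wA_smul_le {σ z z' : ℝ} (hσ : 0 ≤ σ) (hz' : 0 ≤ z') (hzz : z' ≤ z)
    (hs : 0 ≤ s) (hst : s ≤ t) :
    wA d σ z' k (t • toE k) ≤
      Real.sqrt 2 ^ σ * (jap (‖toE k‖ * (t - s)) ^ σ * Real.exp (z' * jap (‖toE k‖ * (t - s)))) *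
        wA d σ z k (s • toE k) := by
  set y := jap (‖toE k‖ * (t - s))
  have hy : 0 ≤ y := zero_le_one.trans (one_le_jap _)
  have hV : 0 ≤ japV (s • toE k) := Real.sqrt_nonneg _
  have hexp : Real.exp (z' * japKV k (t • toE k)) ≤
      Real.exp (z' * y) * Real.exp (z * japKV k (s • toE k)) := by
    rw [← Real.exp_add, Real.exp_le_exp]
    have hray := mul_le_mul_of_nonneg_left (japKV_smul_le_add k hs hst) hz'
    have hu : z' * (‖toE k‖ * (t - s)) ≤ z' * y := mul_le_mul_of_nonneg_left (le_jap _) hz'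
    have hz : z' * japKV k (s • toE k) ≤ z * japKV k (s • toE k) :=
      mul_le_mul_of_nonneg_right hzz (Real.sqrt_nonneg _)
    linarith
  have hpow : japV (t • toE k) ^ σ ≤ Real.sqrt 2 ^ σ * japV (s • toE k) ^ σ * y ^ σ := by
    rw [← Real.mul_rpow (Real.sqrt_nonneg 2) hV, ← Real.mul_rpow (by positivity) hy]
    exact Real.rpow_le_rpow (Real.sqrt_nonneg _) (japV_smul_le_mul k hs hst) hσ
  calc wA d σ z' k (t • toE k)
      ≤ (Real.exp (z' * y) * Real.exp (z * japKV k (s • toE k))) *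
          (Real.sqrt 2 ^ σ * japV (s • toE k) ^ σ * y ^ σ) :=
        mul_le_mul hexp hpow (Real.rpow_nonneg (Real.sqrt_nonneg _) σ) (by positivity)
    _ = _ := by rw [wA]; ring

end Ray

lemma rpow_le_factorial_div_mul_exp {σ ε x : ℝ} (n : ℕ) (hn : σ ≤ n) (hε : 0 < ε) (hx : 1 ≤ x) :
    x ^ σ ≤ n.factorial / ε ^ n * Real.exp (ε * x) := by
  have hfact := Real.pow_div_factorial_le_exp (ε * x) (by positivity) n
  rw [div_le_iff₀ (by positivity)] at hfact
  calc x ^ σ ≤ x ^ (n : ℝ) := Real.rpow_le_rpow_of_exponent_le hx hn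
    _ = (ε * x) ^ n / ε ^ n := by rw [Real.rpow_natCast, mul_pow]; field_simp
    _ ≤ _ := by rw [div_mul_eq_mul_div, div_le_div_iff_of_pos_right (by positivity)]; linarith

lemma rpow_mul_exp_neg_le {σ θ ε x τ : ℝ} (n : ℕ) (hn : σ ≤ n) (hθ : 0 ≤ θ) (hε : 0 < ε)
    (hx : 1 ≤ x) (hτx : τ ≤ x) :
    x ^ σ * Real.exp (-(θ + ε) * x) ≤ n.factorial / ε ^ n * Real.exp (-θ * τ) := by
  calc x ^ σ * Real.exp (-(θ + ε) * x)
      ≤ n.factorial / ε ^ n * Real.exp (ε * x) * Real.exp (-(θ + ε) * x) :=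
        mul_le_mul_of_nonneg_right (rpow_le_factorial_div_mul_exp n hn hε hx) (by positivity)
    _ = n.factorial / ε ^ n * Real.exp (-θ * x) := by rw [mul_assoc, ← Real.exp_add]; ring_nf
    _ ≤ _ := by
        have : -θ * x ≤ -θ * τ := by nlinarith
        gcongr

lemma lam_nonneg {lam0 δ t : ℝ} (hl : 0 ≤ lam0) (ht : 0 ≤ t) : 0 ≤ lam lam0 δ t := by
  have := Real.rpow_nonneg (show (0:ℝ) ≤ 1 + t by linarith) (-δ)
  unfold lam; positivity

lemma lam_le_two_mul {lam0 δ t : ℝ} (hl : 0 ≤ lam0) (hδ : 0 < δ) (ht : 0 ≤ t) :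
    lam lam0 δ t ≤ 2 * lam0 := by
  have : (1 + t) ^ (-δ) ≤ 1 := Real.rpow_le_one_of_one_le_of_nonpos (by linarith) (by linarith)
  unfold lam; nlinarith

lemma lam_le_lam_of_le {lam0 δ s t : ℝ} (hl : 0 ≤ lam0) (hδ : 0 < δ) (hs : 0 ≤ s) (hst : s ≤ t) :
    lam lam0 δ t ≤ lam lam0 δ s := by
  have := Real.rpow_le_rpow_of_nonpos (by linarith) (by linarith : 1 + s ≤ 1 + t)
    (by linarith : -δ ≤ 0)
  unfold lam; nlinarith

lemma wA_mul_green_le {d : ℕ} {σ lam0 δ θ₀ C_G θ₁ : ℝ} (hσ : 0 ≤ σ) (hl : 0 ≤ lam0) (hδ : 0 < δ)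
    (hCG : 0 ≤ C_G) (hθ₁ : 0 ≤ θ₁) (hθθ : 2 * θ₁ < θ₀ - 2 * lam0) (n : ℕ) (hn : σ ≤ n)
    {k : Fin d → ℤ} (hk : k ≠ 0) {s t : ℝ} (hs : 0 ≤ s) (hst : s ≤ t) :
    wA d σ (lam lam0 δ t) k (t • toE k) *
        (C_G * (japV (toE k))⁻¹ * Real.exp (-θ₀ * jap (‖toE k‖ * (t - s)))) ≤
      C_G * Real.sqrt 2 ^ σ * (n.factorial / (θ₀ - 2 * lam0 - 2 * θ₁) ^ n) *
        Real.exp (-2 * θ₁ * (t - s)) * wA d σ (lam lam0 δ s) k (s • toE k) := by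
  set y := jap (‖toE k‖ * (t - s))
  have hy : 1 ≤ y := one_le_jap _
  have hτy : t - s ≤ y := calc
    t - s ≤ ‖toE k‖ * (t - s) := le_mul_of_one_le_left (by linarith) (one_le_norm_toE hk)
    _ ≤ y := le_jap _
  have htransfer :=
    wA_smul_le k hσ (lam_nonneg hl (hs.trans hst)) (lam_le_lam_of_le hl hδ hs hst) hs hst
  have hlam : Real.exp (lam lam0 δ t * y) ≤ Real.exp (2 * lam0 * y) := by
    gcongr; exact lam_le_two_mul hl hδ (hs.trans hst)
  have hdecay : y ^ σ * Real.exp (-(2 * θ₁ + (θ₀ - 2 * lam0 - 2 * θ₁)) * y) ≤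
      n.factorial / (θ₀ - 2 * lam0 - 2 * θ₁) ^ n * Real.exp (-2 * θ₁ * (t - s)) := by
    convert rpow_mul_exp_neg_le (ε := θ₀ - 2 * lam0 - 2 * θ₁) n hn (by positivity : 0 ≤ 2 * θ₁)
      (by linarith) hy hτy using 3
    ring
  have hinv : (japV (toE k))⁻¹ ≤ 1 := inv_le_one_of_one_le₀ (one_le_jap _)
  have hW := wA_nonneg d σ (lam lam0 δ s) k (s • toE k)
  calc wA d σ (lam lam0 δ t) k (t • toE k) * (C_G * (japV (toE k))⁻¹ * Real.exp (-θ₀ * y))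
      ≤ (Real.sqrt 2 ^ σ * (y ^ σ * Real.exp (2 * lam0 * y)) *
            wA d σ (lam lam0 δ s) k (s • toE k)) * (C_G * 1 * Real.exp (-θ₀ * y)) := by
        have hG : 0 ≤ C_G * (japV (toE k))⁻¹ * Real.exp (-θ₀ * y) := by
          have : 0 ≤ japV (toE k) := Real.sqrt_nonneg _
          positivity
        exact mul_le_mul (htransfer.trans (by gcongr)) (by gcongr) hG (by positivity)
    _ = C_G * Real.sqrt 2 ^ σ * (y ^ σ * Real.exp (-(2 * θ₁ + (θ₀ - 2 * lam0 - 2 * θ₁)) * y)) *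
          wA d σ (lam lam0 δ s) k (s • toE k) := by
        rw [show -(2 * θ₁ + (θ₀ - 2 * lam0 - 2 * θ₁)) * y = 2 * lam0 * y + -θ₀ * y by ring,
          Real.exp_add]
        ring
    _ ≤ C_G * Real.sqrt 2 ^ σ *
          (n.factorial / (θ₀ - 2 * lam0 - 2 * θ₁) ^ n * Real.exp (-2 * θ₁ * (t - s))) *
          wA d σ (lam lam0 δ s) k (s • toE k) := by gcongr
    _ = _ := by ring

lemma sum_lintegral_le_lintegral_sum {α ι : Type*} [MeasurableSpace α] {μ : Measure α}
    (s : Finset ι) (f : ι → α → ℝ≥0∞) :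
    ∑ i ∈ s, ∫⁻ a, f i a ∂μ ≤ ∫⁻ a, ∑ i ∈ s, f i a ∂μ := by
  classical
  induction s using Finset.induction_on with
  | empty => simp
  | insert i s hi ih =>
    simp only [Finset.sum_insert hi]
    exact (add_le_add_right ih _).trans (le_lintegral_add _ _)

lemma tsum_lintegral_le_lintegral_tsum {α ι : Type*} [MeasurableSpace α] {μ : Measure α}
    (f : ι → α → ℝ≥0∞) :
    ∑' i, ∫⁻ a, f i a ∂μ ≤ ∫⁻ a, ∑' i, f i a ∂μ := by
  rw [ENNReal.tsum_eq_iSup_sum]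
  exact iSup_le fun s => (sum_lintegral_le_lintegral_sum s f).trans
    (lintegral_mono fun a => ENNReal.sum_le_tsum s)

lemma Fnorm_add_le {d : ℕ} (σ : ℝ) (S T : (Fin d → ℤ) → ℝ → ℂ) (t z : ℝ) :
    Fnorm d σ (fun k τ => S k τ + T k τ) t z ≤ Fnorm d σ S t z + Fnorm d σ T t z := by
  rw [Fnorm, Fnorm, Fnorm, ← ENNReal.tsum_add]
  refine ENNReal.tsum_le_tsum fun k => ?_
  have hW := wA_nonneg d σ z k.1 (t • toE k.1)
  rw [← ENNReal.ofReal_add (by positivity) (by positivity), ← mul_add]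
  gcongr
  exact norm_add_le _ _

lemma ofReal_mul_norm_intervalIntegral_le {f g : ℝ → ℂ} {K : ℝ → ℝ} {W t : ℝ}
    (ht : 0 ≤ t) (hW : 0 ≤ W) (hK : ∀ s ∈ Set.Ioc 0 t, W * ‖f s‖ ≤ K s) :
    ENNReal.ofReal (W * ‖∫ s in (0:ℝ)..t, f s * g s‖) ≤
      ∫⁻ s in Set.Ioc 0 t, ENNReal.ofReal (K s * ‖g s‖) := by
  rw [intervalIntegral.integral_of_le ht, ENNReal.ofReal_mul hW, ofReal_norm]
  calc ENNReal.ofReal W * ‖∫ s in Set.Ioc 0 t, f s * g s‖ₑ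
      ≤ ENNReal.ofReal W * ∫⁻ s in Set.Ioc 0 t, ‖f s * g s‖ₑ := by
        gcongr; exact enorm_integral_le_lintegral_enorm _
    _ = ∫⁻ s in Set.Ioc 0 t, ENNReal.ofReal W * ‖f s * g s‖ₑ :=
        (lintegral_const_mul' _ _ ENNReal.ofReal_ne_top).symm
    _ ≤ _ := by
        refine setLIntegral_mono' measurableSet_Ioc fun s hs => ?_
        rw [← ofReal_norm, ← ENNReal.ofReal_mul hW, norm_mul, ← mul_assoc]
        gcongr
        exact hK s hs

lemma tsum_lintegral_le_mul_lintegral_Fnorm {d : ℕ} (σ : ℝ) (S : (Fin d → ℤ) → ℝ → ℂ)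
    (μ : Measure ℝ) (z φ : ℝ → ℝ) {C : ℝ} (hC : 0 ≤ C) (hφ : ∀ s, 0 ≤ φ s) :
    ∑' k : {k : Fin d → ℤ // k ≠ 0},
        ∫⁻ s, ENNReal.ofReal (C * φ s * wA d σ (z s) k.1 (s • toE k.1) * ‖S k.1 s‖) ∂μ ≤
      ENNReal.ofReal C * ∫⁻ s, ENNReal.ofReal (φ s) * Fnorm d σ S s (z s) ∂μ := by
  have hsplit : ∀ (k : {k : Fin d → ℤ // k ≠ 0}) s,
      ENNReal.ofReal (C * φ s * wA d σ (z s) k.1 (s • toE k.1) * ‖S k.1 s‖) =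
        ENNReal.ofReal C * (ENNReal.ofReal (φ s) *
          ENNReal.ofReal (wA d σ (z s) k.1 (s • toE k.1) * ‖S k.1 s‖)) := by
    intro k s
    rw [← ENNReal.ofReal_mul (hφ s), ← ENNReal.ofReal_mul hC]
    ring_nf
  simp_rw [hsplit]
  refine (tsum_lintegral_le_lintegral_tsum _).trans ?_
  rw [← lintegral_const_mul' _ _ ENNReal.ofReal_ne_top]
  refine lintegral_mono fun s => ?_
  rw [ENNReal.tsum_mul_left, ENNReal.tsum_mul_left, Fnorm]

theorem green_convolution_bound_general (d : ℕ) (σ lam0 δ θ₀ C_G : ℝ)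
    (hσ : 0 ≤ σ) (hl : 0 < lam0) (hδ0 : 0 < δ)
    (hCG : 0 < C_G)
    (θ₁ : ℝ) (hθ₁ : 0 < θ₁) (hθθ : 2 * θ₁ < θ₀ - 2 * lam0) :
    ∃ C > (0:ℝ),
      ∀ Gr : (Fin d → ℤ) → ℝ → ℂ, (∀ k, Measurable (Gr k)) →
      (∀ k : Fin d → ℤ, k ≠ 0 → ∀ τ : ℝ, 0 ≤ τ →
        ‖Gr k τ‖ ≤ C_G * (japV (toE k))⁻¹ * Real.exp (-θ₀ * jap (‖toE k‖ * τ))) →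
      ∀ S : (Fin d → ℤ) → ℝ → ℂ, (∀ k, Measurable (S k)) →
      ∀ t : ℝ, 0 ≤ t →
        Fnorm d σ (fun k τ => S k τ + ∫ s in (0:ℝ)..τ, Gr k (τ - s) * S k s)
            t (lam lam0 δ t) ≤
          Fnorm d σ S t (lam lam0 δ t) +
            ENNReal.ofReal C *
              ∫⁻ s in Set.Ioc (0:ℝ) t,
                ENNReal.ofReal (Real.exp (-2 * θ₁ * (t - s))) *
                  Fnorm d σ S s (lam lam0 δ s) := by
  set n := ⌈σ⌉₊
  have hε : 0 < θ₀ - 2 * lam0 - 2 * θ₁ := by linarith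
  set C := C_G * Real.sqrt 2 ^ σ * (n.factorial / (θ₀ - 2 * lam0 - 2 * θ₁) ^ n)
  refine ⟨C, by positivity, fun Gr _ hG S _ t ht => ?_⟩
  have hmode : ∀ k : {k : Fin d → ℤ // k ≠ 0}, ∀ s ∈ Set.Ioc 0 t,
      wA d σ (lam lam0 δ t) k.1 (t • toE k.1) * ‖Gr k.1 (t - s)‖ ≤
        C * Real.exp (-2 * θ₁ * (t - s)) * wA d σ (lam lam0 δ s) k.1 (s • toE k.1) :=
    fun k s hs =>
      (mul_le_mul_of_nonneg_left (hG k.1 k.2 _ (by linarith [hs.2])) (wA_nonneg _ _ _ _ _)).trans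
        (wA_mul_green_le hσ hl.le hδ0 hCG.le hθ₁.le hθθ n (Nat.le_ceil σ) k.2 hs.1.le hs.2)
  calc _ ≤ Fnorm d σ S t (lam lam0 δ t) +
        Fnorm d σ (fun k τ => ∫ s in (0:ℝ)..τ, Gr k (τ - s) * S k s) t (lam lam0 δ t) :=
        Fnorm_add_le σ S _ t _
    _ ≤ Fnorm d σ S t (lam lam0 δ t) + ∑' k : {k : Fin d → ℤ // k ≠ 0},
          ∫⁻ s in Set.Ioc 0 t, ENNReal.ofReal (C * Real.exp (-2 * θ₁ * (t - s)) *
            wA d σ (lam lam0 δ s) k.1 (s • toE k.1) * ‖S k.1 s‖) := by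
        gcongr
        exact ENNReal.tsum_le_tsum fun k =>
          ofReal_mul_norm_intervalIntegral_le ht (wA_nonneg _ _ _ _ _) (hmode k)
    _ ≤ _ := by
        gcongr
        exact tsum_lintegral_le_mul_lintegral_Fnorm σ S _ _ _ (by positivity)
          fun s => (Real.exp_pos _).le

/-- convolution with the Green kernel `δ(t) + G^r_k(t)`, where
`|G^r_k(τ)| ≤ C_G ⟨k⟩^{-1} e^{-θ₀⟨|k|τ⟩}`, satisfies
`F[G⋆S](t,λ(t)) ≤ F[S](t,λ(t)) + C ∫₀^t e^{-2θ₁(t-s)} F[S](s,λ(s)) ds`. -/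
theorem green_convolution_bound (d : ℕ) (hd : 1 ≤ d) (σ lam0 δ θ₀ C_G : ℝ)
    (hσ : 0 ≤ σ) (hl : 0 < lam0) (hδ0 : 0 < δ) (hδ1 : δ < 1)
    (hθ₀ : θ₀ > 2 * lam0) (hCG : 0 < C_G)
    (θ₁ : ℝ) (hθ₁ : 0 < θ₁) (hθθ : 2 * θ₁ < θ₀ - 2 * lam0) :
    ∃ C > (0:ℝ),
      ∀ Gr : (Fin d → ℤ) → ℝ → ℂ, (∀ k, Measurable (Gr k)) →
      (∀ k : Fin d → ℤ, k ≠ 0 → ∀ τ : ℝ, 0 ≤ τ →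
        ‖Gr k τ‖ ≤ C_G * (japV (toE k))⁻¹ * Real.exp (-θ₀ * jap (‖toE k‖ * τ))) →
      ∀ S : (Fin d → ℤ) → ℝ → ℂ, (∀ k, Measurable (S k)) →
      ∀ t : ℝ, 0 ≤ t →
        Fnorm d σ (fun k τ => S k τ + ∫ s in (0:ℝ)..τ, Gr k (τ - s) * S k s)
            t (lam lam0 δ t) ≤
          Fnorm d σ S t (lam lam0 δ t) +
            ENNReal.ofReal C *
              ∫⁻ s in Set.Ioc (0:ℝ) t,
                ENNReal.ofReal (Real.exp (-2 * θ₁ * (t - s))) *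
                  Fnorm d σ S s (lam lam0 δ s) :=
  green_convolution_bound_general d σ lam0 δ θ₀ C_G hσ hl hδ0 hCG θ₁ hθ₁ hθθ
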